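/- arXiv:1402.7057 — 10 statements merged into one kernel-verified Lean document; each statement's English description precedes it below -/
import Mathlib

section
/- Let N ≥ 1 be an integer, q ∈ [0,1], and set μ = N·q. Let f : ℕ → ℝ satisfy 0 ≤ f(n) ≤ 1 for all n, and define F_f(N) = Σ_{n=0}^{N} C(N,n) q^n (1-q)^{N-n} f(n). For any δ ∈ (0,1), define g_f(N,δ) = min{ f(n) : ⌊(1-δ)μ⌋ ≤ n ≤ ⌈(1+δ)μ⌉ } and h_f(N,δ) = max{ f(n) : ⌊(1-δ)μ⌋ ≤ n ≤ ⌈(1+δ)μ⌉ }. Then g_f(N,δ)·(1 - 2e^{-μδ²/3}) ≤ F_f(N) ≤ h_f(N,δ) + 2e^{-μδ²/3}. -/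
open Finset Real

/-!
The weights `C(N,n) q^n (1-q)^(N-n)` sum to one, so `F_f(N)` lies between the infimum of `f` on
the window times the mass of the window and the supremum of `f` on the window plus the mass
outside it. Both tails are bounded by Chernoff's method: for any `t`, the mass of `{n ≥ a}`
(for `t ≥ 0`) or `{n ≤ a}` (for `t ≤ 0`) is at most `e^{-ta} ∑ C(N,n) q^n (1-q)^(N-n) e^{tn}
= e^{-ta} (1 + q(e^t - 1))^N ≤ e^{μ(e^t - 1) - ta}`. Taking `e^t = 1 ± δ` and `a = (1 ± δ)μ`
leaves the elementary inequalities `(1+δ)log(1+δ) - δ ≥ δ²/3` and `(1-δ)log(1-δ) + δ ≥ δ²/2`.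
-/

lemma le_of_hasDerivAt_nonneg {g g' : ℝ → ℝ} {a b : ℝ} (hab : a ≤ b)
    (hg : ∀ y ∈ Set.Icc a b, HasDerivAt g (g' y) y) (hg' : ∀ y ∈ Set.Ioo a b, 0 ≤ g' y) :
    g a ≤ g b :=
  monotoneOn_of_hasDerivWithinAt_nonneg (convex_Icc a b)
    (fun y hy ↦ (hg y hy).continuousAt.continuousWithinAt)
    (fun y hy ↦ (hg y (interior_subset hy)).hasDerivWithinAt)
    (fun y hy ↦ hg' y (by rwa [interior_Icc] at hy))
    (Set.left_mem_Icc.2 hab) (Set.right_mem_Icc.2 hab) hab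

lemma sq_div_three_le_one_add_mul_log_one_add_sub {x : ℝ} (hx₀ : 0 ≤ x) (hx₁ : x ≤ 1) :
    x ^ 2 / 3 ≤ (1 + x) * log (1 + x) - x := by
  have hderiv : ∀ y ∈ Set.Icc 0 x,
      HasDerivAt (fun y ↦ (1 + y) * log (1 + y) - y - y ^ 2 / 3) (log (1 + y) - 2 * y / 3) y := by
    intro y hy
    have hmul := (hasDerivAt_mul_log (by linarith [hy.1] : (0 : ℝ) < 1 + y).ne').comp_const_add 1 y
    refine ((hmul.sub (hasDerivAt_id' y)).sub ((hasDerivAt_pow 2 y).div_const 3)).congr_deriv ?_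
    norm_num
  have hmono := le_of_hasDerivAt_nonneg hx₀ hderiv fun y hy ↦ by
    have hlog := le_log_one_add_of_nonneg hy.1.le
    have : 2 * y / 3 ≤ 2 * y / (y + 2) :=
      div_le_div_of_nonneg_left (by linarith [hy.1]) (by linarith [hy.1]) (by linarith [hy.2])
    linarith
  norm_num at hmono
  linarith

lemma sq_div_two_le_one_sub_mul_log_one_sub_add {x : ℝ} (hx₀ : 0 ≤ x) (hx₁ : x < 1) :
    x ^ 2 / 2 ≤ (1 - x) * log (1 - x) + x := by
  have hderiv : ∀ y ∈ Set.Icc 0 x,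
      HasDerivAt (fun y ↦ (1 - y) * log (1 - y) + y - y ^ 2 / 2) (-log (1 - y) - y) y := by
    intro y hy
    have hmul := (hasDerivAt_mul_log (by linarith [hy.2] : (0 : ℝ) < 1 - y).ne').comp_const_sub 1 y
    refine ((hmul.add (hasDerivAt_id' y)).sub ((hasDerivAt_pow 2 y).div_const 2)).congr_deriv ?_
    norm_num
  have hmono := le_of_hasDerivAt_nonneg hx₀ hderiv fun y hy ↦ by
    linarith [log_le_sub_one_of_pos (by linarith [hy.2] : (0 : ℝ) < 1 - y)]
  norm_num at hmono
  linarith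

lemma sum_filter_le_exp_mul_sum_mul_exp {ι : Type*} (s : Finset ι) {p x : ι → ℝ}
    (hp : ∀ i ∈ s, 0 ≤ p i) (P : ι → Prop) [DecidablePred P] {t a : ℝ}
    (hP : ∀ i ∈ s, P i → t * a ≤ t * x i) :
    ∑ i ∈ s with P i, p i ≤ exp (-(t * a)) * ∑ i ∈ s, p i * exp (t * x i) := by
  rw [mul_sum]
  calc ∑ i ∈ s with P i, p i
      ≤ ∑ i ∈ s with P i, exp (-(t * a)) * (p i * exp (t * x i)) := by
        refine sum_le_sum fun i hi ↦ ?_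
        obtain ⟨his, hPi⟩ := mem_filter.1 hi
        rw [mul_left_comm, ← exp_add]
        exact le_mul_of_one_le_right (hp i his) (one_le_exp (by linarith [hP i his hPi]))
    _ ≤ ∑ i ∈ s, exp (-(t * a)) * (p i * exp (t * x i)) :=
        sum_le_sum_of_subset_of_nonneg (filter_subset _ _) fun i hi _ ↦ by
          have := hp i hi
          positivity

section Window

variable {ι : Type*} {s : Finset ι} {p f : ι → ℝ} {W : Set ι} [DecidablePred (· ∈ W)] {ε : ℝ}

lemma sInf_image_mul_le_sum_mul (hp : ∀ i ∈ s, 0 ≤ p i) (hp₁ : ∑ i ∈ s, p i = 1)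
    (hf : ∀ i, 0 ≤ f i) (hε : ∑ i ∈ s with i ∉ W, p i ≤ ε) :
    sInf (f '' W) * (1 - ε) ≤ ∑ i ∈ s, p i * f i := by
  have hin : 1 - ε ≤ ∑ i ∈ s with i ∈ W, p i := by
    linarith [sum_filter_add_sum_filter_not s (· ∈ W) p]
  have hinf : ∀ i ∈ W, sInf (f '' W) ≤ f i := fun i hi ↦
    csInf_le ⟨0, by rintro _ ⟨j, -, rfl⟩; exact hf j⟩ (Set.mem_image_of_mem f hi)
  calc sInf (f '' W) * (1 - ε)
      ≤ sInf (f '' W) * ∑ i ∈ s with i ∈ W, p i :=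
        mul_le_mul_of_nonneg_left hin (Real.sInf_nonneg (by rintro _ ⟨j, -, rfl⟩; exact hf j))
    _ = ∑ i ∈ s with i ∈ W, p i * sInf (f '' W) := by rw [mul_sum]; simp_rw [mul_comm]
    _ ≤ ∑ i ∈ s with i ∈ W, p i * f i := sum_le_sum fun i hi ↦
        mul_le_mul_of_nonneg_left (hinf i (mem_filter.1 hi).2) (hp i (filter_subset _ _ hi))
    _ ≤ ∑ i ∈ s, p i * f i := sum_le_sum_of_subset_of_nonneg (filter_subset _ _)
        fun i hi _ ↦ mul_nonneg (hp i hi) (hf i)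

lemma sum_mul_le_sSup_image_add (hp : ∀ i ∈ s, 0 ≤ p i) (hp₁ : ∑ i ∈ s, p i = 1)
    (hf : ∀ i, f i ∈ Set.Icc (0 : ℝ) 1) (hε : ∑ i ∈ s with i ∉ W, p i ≤ ε) :
    ∑ i ∈ s, p i * f i ≤ sSup (f '' W) + ε := by
  have hsup : ∀ i ∈ W, f i ≤ sSup (f '' W) := fun i hi ↦
    le_csSup ⟨1, by rintro _ ⟨j, -, rfl⟩; exact (hf j).2⟩ (Set.mem_image_of_mem f hi)
  have hin_mass : ∑ i ∈ s with i ∈ W, p i ≤ 1 := by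
    have : 0 ≤ ∑ i ∈ s with i ∉ W, p i := sum_nonneg fun i hi ↦ hp i (filter_subset _ _ hi)
    linarith [sum_filter_add_sum_filter_not s (· ∈ W) p]
  have hin : ∑ i ∈ s with i ∈ W, p i * f i ≤ sSup (f '' W) :=
    calc ∑ i ∈ s with i ∈ W, p i * f i
        ≤ ∑ i ∈ s with i ∈ W, p i * sSup (f '' W) := sum_le_sum fun i hi ↦
          mul_le_mul_of_nonneg_left (hsup i (mem_filter.1 hi).2) (hp i (filter_subset _ _ hi))
      _ = (∑ i ∈ s with i ∈ W, p i) * sSup (f '' W) := (sum_mul _ _ _).symm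
      _ ≤ sSup (f '' W) := mul_le_of_le_one_left
          (Real.sSup_nonneg (by rintro _ ⟨j, -, rfl⟩; exact (hf j).1)) hin_mass
  have hout : ∑ i ∈ s with i ∉ W, p i * f i ≤ ε :=
    (sum_le_sum fun i hi ↦ mul_le_of_le_one_right (hp i (filter_subset _ _ hi)) (hf i).2).trans hε
  linarith [sum_filter_add_sum_filter_not s (· ∈ W) (fun i ↦ p i * f i)]

end Window

def binomialWeight (N : ℕ) (q : ℝ) (n : ℕ) : ℝ := N.choose n * q ^ n * (1 - q) ^ (N - n)

lemma sum_binomialWeight_mul_pow (N : ℕ) (q r : ℝ) :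
    ∑ n ∈ range (N + 1), binomialWeight N q n * r ^ n = (q * r + (1 - q)) ^ N := by
  rw [add_pow]
  refine sum_congr rfl fun n _ ↦ ?_
  rw [binomialWeight, mul_pow]
  ring

lemma sum_binomialWeight (N : ℕ) (q : ℝ) : ∑ n ∈ range (N + 1), binomialWeight N q n = 1 := by
  simpa using sum_binomialWeight_mul_pow N q 1

section Binomial

variable {q : ℝ} (N : ℕ)

lemma binomialWeight_nonneg (hq : q ∈ Set.Icc (0 : ℝ) 1) (n : ℕ) : 0 ≤ binomialWeight N q n := by
  have := hq.1
  have := sub_nonneg.2 hq.2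
  unfold binomialWeight
  positivity

lemma sum_binomialWeight_mul_exp_le (hq : q ∈ Set.Icc (0 : ℝ) 1) (t : ℝ) :
    ∑ n ∈ range (N + 1), binomialWeight N q n * exp (t * n) ≤ exp (N * q * (exp t - 1)) := by
  have hmgf : ∑ n ∈ range (N + 1), binomialWeight N q n * exp (t * n)
      = (1 + q * (exp t - 1)) ^ N := by
    simp_rw [mul_comm t, exp_nat_mul, sum_binomialWeight_mul_pow]
    ring
  have hbase : 0 ≤ 1 + q * (exp t - 1) := by nlinarith [exp_pos t, hq.1, hq.2]
  rw [hmgf, mul_assoc, exp_nat_mul]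
  exact pow_le_pow_left₀ hbase (by linarith [add_one_le_exp (q * (exp t - 1))]) N

lemma sum_filter_binomialWeight_le_exp (hq : q ∈ Set.Icc (0 : ℝ) 1) (P : ℕ → Prop)
    [DecidablePred P] {t a : ℝ} (hP : ∀ n, P n → t * a ≤ t * n) :
    ∑ n ∈ range (N + 1) with P n, binomialWeight N q n ≤ exp (N * q * (exp t - 1) - t * a) :=
  calc ∑ n ∈ range (N + 1) with P n, binomialWeight N q n
      ≤ exp (-(t * a)) * ∑ n ∈ range (N + 1), binomialWeight N q n * exp (t * n) :=
        sum_filter_le_exp_mul_sum_mul_exp _ (fun n _ ↦ binomialWeight_nonneg N hq n) P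
          fun n _ ↦ hP n
    _ ≤ exp (-(t * a)) * exp (N * q * (exp t - 1)) := by
        gcongr
        exact sum_binomialWeight_mul_exp_le N hq t
    _ = exp (N * q * (exp t - 1) - t * a) := by rw [← exp_add]; ring_nf

lemma sum_binomialWeight_upper_tail_le (hq : q ∈ Set.Icc (0 : ℝ) 1) {δ : ℝ}
    (hδ : δ ∈ Set.Icc (0 : ℝ) 1) :
    ∑ n ∈ (range (N + 1)).filter (fun n : ℕ ↦ (1 + δ) * (N * q) ≤ n), binomialWeight N q n
      ≤ exp (-(N * q * δ ^ 2) / 3) := by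
  have hμ : 0 ≤ (N : ℝ) * q := by have := hq.1; positivity
  refine (sum_filter_binomialWeight_le_exp N hq _ (t := log (1 + δ)) fun n hn ↦
    mul_le_mul_of_nonneg_left hn (log_nonneg (by linarith [hδ.1]))).trans (exp_le_exp.2 ?_)
  rw [exp_log (by linarith [hδ.1])]
  nlinarith [mul_le_mul_of_nonneg_left (sq_div_three_le_one_add_mul_log_one_add_sub hδ.1 hδ.2) hμ]

lemma sum_binomialWeight_lower_tail_le (hq : q ∈ Set.Icc (0 : ℝ) 1) {δ : ℝ}
    (hδ : δ ∈ Set.Ico (0 : ℝ) 1) :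
    ∑ n ∈ (range (N + 1)).filter (fun n : ℕ ↦ n ≤ (1 - δ) * (N * q)), binomialWeight N q n
      ≤ exp (-(N * q * δ ^ 2) / 2) := by
  have hμ : 0 ≤ (N : ℝ) * q := by have := hq.1; positivity
  refine (sum_filter_binomialWeight_le_exp N hq _ (t := log (1 - δ)) fun n hn ↦
    mul_le_mul_of_nonpos_left hn (log_nonpos (by linarith [hδ.2]) (by linarith [hδ.1]))).trans
    (exp_le_exp.2 ?_)
  rw [exp_log (by linarith [hδ.2])]
  nlinarith [mul_le_mul_of_nonneg_left (sq_div_two_le_one_sub_mul_log_one_sub_add hδ.1 hδ.2) hμ]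

lemma sum_binomialWeight_not_mem_window_le (hq : q ∈ Set.Icc (0 : ℝ) 1) {δ : ℝ}
    (hδ : δ ∈ Set.Ioo (0 : ℝ) 1) :
    ∑ n ∈ range (N + 1) with n ∉ Set.Icc ⌊(1 - δ) * (N * q)⌋₊ ⌈(1 + δ) * (N * q)⌉₊,
      binomialWeight N q n ≤ 2 * exp (-(N * q * δ ^ 2) / 3) := by
  set lower := (range (N + 1)).filter fun n : ℕ ↦ (n : ℝ) ≤ (1 - δ) * (N * q)
  set upper := (range (N + 1)).filter fun n : ℕ ↦ (1 + δ) * (N * q) ≤ n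
  have hsub : (range (N + 1)).filter (· ∉ Set.Icc ⌊(1 - δ) * (N * q)⌋₊ ⌈(1 + δ) * (N * q)⌉₊)
      ⊆ lower ∪ upper := by
    intro n hn
    obtain ⟨hnN, hn⟩ := mem_filter.1 hn
    rw [Set.mem_Icc, not_and_or, not_le, not_le] at hn
    rcases hn with hn | hn
    · exact mem_union_left _ (mem_filter.2 ⟨hnN, (Nat.lt_of_lt_floor hn).le⟩)
    · exact mem_union_right _ (mem_filter.2 ⟨hnN, (Nat.lt_of_ceil_lt hn).le⟩)
  have hnonneg : ∀ n, 0 ≤ binomialWeight N q n := binomialWeight_nonneg N hq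
  have hsplit := sum_union_inter (s₁ := lower) (s₂ := upper) (f := binomialWeight N q)
  have hinter : 0 ≤ ∑ n ∈ lower ∩ upper, binomialWeight N q n := sum_nonneg fun n _ ↦ hnonneg n
  have hlow := sum_binomialWeight_lower_tail_le N hq ⟨hδ.1.le, hδ.2⟩
  have hhigh := sum_binomialWeight_upper_tail_le N hq ⟨hδ.1.le, hδ.2.le⟩
  have hexp : exp (-(N * q * δ ^ 2) / 2) ≤ exp (-(N * q * δ ^ 2) / 3) := by
    have : 0 ≤ (N : ℝ) * q * δ ^ 2 := by have := hq.1; positivity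
    exact exp_le_exp.2 (by linarith)
  linarith [sum_le_sum_of_subset_of_nonneg hsub fun n _ _ ↦ hnonneg n]

end Binomial

theorem chernoff_window_bounds_general (N : ℕ) (q : ℝ) (hq : q ∈ Set.Icc (0:ℝ) 1)
    (f : ℕ → ℝ) (hf : ∀ n, f n ∈ Set.Icc (0:ℝ) 1)
    (δ : ℝ) (hδ : δ ∈ Set.Ioo (0:ℝ) 1) :
    sInf (f '' Set.Icc ⌊(1 - δ) * ((N : ℝ) * q)⌋₊ ⌈(1 + δ) * ((N : ℝ) * q)⌉₊) *
        (1 - 2 * Real.exp (-(((N : ℝ) * q) * δ ^ 2) / 3)) ≤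
      ∑ n ∈ Finset.range (N + 1),
        (N.choose n : ℝ) * q ^ n * (1 - q) ^ (N - n) * f n ∧
    ∑ n ∈ Finset.range (N + 1),
        (N.choose n : ℝ) * q ^ n * (1 - q) ^ (N - n) * f n ≤
      sSup (f '' Set.Icc ⌊(1 - δ) * ((N : ℝ) * q)⌋₊ ⌈(1 + δ) * ((N : ℝ) * q)⌉₊) +
        2 * Real.exp (-(((N : ℝ) * q) * δ ^ 2) / 3) := by
  have hp : ∀ n ∈ range (N + 1), 0 ≤ binomialWeight N q n :=
    fun n _ ↦ binomialWeight_nonneg N hq n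
  have hmass := sum_binomialWeight_not_mem_window_le N hq hδ
  exact ⟨sInf_image_mul_le_sum_mul hp (sum_binomialWeight N q) (fun n ↦ (hf n).1) hmass,
    sum_mul_le_sSup_image_add hp (sum_binomialWeight N q) hf hmass⟩

theorem chernoff_window_bounds (N : ℕ) (hN : 1 ≤ N) (q : ℝ) (hq : q ∈ Set.Icc (0:ℝ) 1)
    (f : ℕ → ℝ) (hf : ∀ n, f n ∈ Set.Icc (0:ℝ) 1)
    (δ : ℝ) (hδ : δ ∈ Set.Ioo (0:ℝ) 1) :
    sInf (f '' Set.Icc ⌊(1 - δ) * ((N : ℝ) * q)⌋₊ ⌈(1 + δ) * ((N : ℝ) * q)⌉₊) *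
        (1 - 2 * Real.exp (-(((N : ℝ) * q) * δ ^ 2) / 3)) ≤
      ∑ n ∈ Finset.range (N + 1),
        (N.choose n : ℝ) * q ^ n * (1 - q) ^ (N - n) * f n ∧
    ∑ n ∈ Finset.range (N + 1),
        (N.choose n : ℝ) * q ^ n * (1 - q) ^ (N - n) * f n ≤
      sSup (f '' Set.Icc ⌊(1 - δ) * ((N : ℝ) * q)⌋₊ ⌈(1 + δ) * ((N : ℝ) * q)⌉₊) +
        2 * Real.exp (-(((N : ℝ) * q) * δ ^ 2) / 3) :=
  chernoff_window_bounds_general N q hq f hf δ hδ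
end

section
/- Fix a real a ≥ 0 and integers 0 ≤ k ≤ L. For each integer M ≥ 1 set q_M = a/√M. Then lim_{M→∞} Σ_{n=0}^{M} C(M,n) q_M^n (1-q_M)^{M-n} (1-(1-q_M)^n)^k ((1-q_M)^n)^{L-k} = (1-e^{-a²})^k (e^{-a²})^{L-k}. -/
open Finset Filter Real
open scoped Topology

/-- If `M * u M → t`, then `(1 + u M) ^ M → exp t`. -/
lemma key_pow_exp (u : ℕ → ℝ) (t : ℝ)
    (h : Tendsto (fun M : ℕ => (M : ℝ) * u M) atTop (𝓝 t)) :
    Tendsto (fun M : ℕ => (1 + u M) ^ M) atTop (𝓝 (Real.exp t)) := by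
  have hinv : Tendsto (fun M : ℕ => ((M : ℝ))⁻¹) atTop (𝓝 0) :=
    tendsto_inv_atTop_zero.comp tendsto_natCast_atTop_atTop
  have hu0 : Tendsto u atTop (𝓝 0) := by
    have h2 := h.mul hinv
    rw [mul_zero] at h2
    apply h2.congr'
    filter_upwards [eventually_gt_atTop 0] with M hM
    have : (M : ℝ) ≠ 0 := by positivity
    field_simp
  have hsmall : ∀ᶠ M in atTop, |u M| ≤ 1 / 2 := by
    have := hu0.abs.eventually_le_const (show |(0 : ℝ)| < 1 / 2 by norm_num)
    simpa using this
  have hineq : ∀ x : ℝ, |x| ≤ 1 / 2 →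
      0 ≤ x - Real.log (1 + x) ∧ x - Real.log (1 + x) ≤ 2 * x ^ 2 := by
    intro x hx
    rw [abs_le] at hx
    have hx1 : (0 : ℝ) < 1 + x := by linarith
    have hub := Real.log_le_sub_one_of_pos hx1
    have hlb := Real.log_le_sub_one_of_pos (inv_pos.mpr hx1)
    rw [Real.log_inv] at hlb
    have hininv : (1 + x) * (1 + x)⁻¹ = 1 := mul_inv_cancel₀ (ne_of_gt hx1)
    constructor
    · linarith
    · nlinarith [sq_nonneg x, sq_nonneg (1 + x)]
  have he : Tendsto (fun M : ℕ => (M : ℝ) * (u M - Real.log (1 + u M))) atTop (𝓝 0) := by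
    have hg : Tendsto (fun M : ℕ => 2 * ((M : ℝ) * u M * u M)) atTop (𝓝 0) := by
      have := (h.mul hu0).const_mul 2
      simpa using this
    apply squeeze_zero' ?_ ?_ hg
    · filter_upwards [hsmall] with M hM
      exact mul_nonneg (Nat.cast_nonneg M) (hineq _ hM).1
    · filter_upwards [hsmall] with M hM
      calc (M : ℝ) * (u M - Real.log (1 + u M)) ≤ (M : ℝ) * (2 * (u M) ^ 2) :=
            mul_le_mul_of_nonneg_left (hineq _ hM).2 (Nat.cast_nonneg M)
        _ = 2 * ((M : ℝ) * u M * u M) := by ring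
  have hlog : Tendsto (fun M : ℕ => (M : ℝ) * Real.log (1 + u M)) atTop (𝓝 t) := by
    have := h.sub he
    rw [sub_zero] at this
    exact this.congr (fun M => by ring)
  have := (Real.continuous_exp.tendsto t).comp hlog
  apply this.congr'
  filter_upwards [hsmall] with M hM
  have hx1 : (0 : ℝ) < 1 + u M := by
    rw [abs_le] at hM; linarith
  simp only [Function.comp_apply]
  rw [Real.exp_nat_mul, Real.exp_log hx1]

theorem star_links_asymptotic_independence (a : ℝ) (ha : 0 ≤ a) (k L : ℕ) (hkL : k ≤ L) :
    Filter.Tendsto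
      (fun M : ℕ =>
        ∑ n ∈ Finset.range (M + 1),
          (M.choose n : ℝ) * (a / Real.sqrt M) ^ n * (1 - a / Real.sqrt M) ^ (M - n) *
            (1 - (1 - a / Real.sqrt M) ^ n) ^ k * ((1 - a / Real.sqrt M) ^ n) ^ (L - k))
      Filter.atTop
      (nhds ((1 - Real.exp (-a ^ 2)) ^ k * (Real.exp (-a ^ 2)) ^ (L - k))) := by
  set q : ℕ → ℝ := fun M => a / Real.sqrt M with hq
  -- q M → 0
  have hq0 : Tendsto q atTop (𝓝 0) := by
    have h1 : Tendsto (fun M : ℕ => a ^ 2 / (M : ℝ)) atTop (𝓝 0) := by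
      exact tendsto_const_div_atTop_nhds_zero_nat (a ^ 2)
    have h2 := (Real.continuous_sqrt.tendsto 0).comp h1
    rw [Real.sqrt_zero] at h2
    apply h2.congr
    intro M
    simp only [Function.comp_apply]
    rw [Real.sqrt_div (sq_nonneg a), Real.sqrt_sq ha]
  -- key limit for each power j
  have hB : ∀ j : ℕ, Tendsto (fun M : ℕ => (q M * (1 - q M) ^ j + (1 - q M)) ^ M) atTop
      (𝓝 (Real.exp (-a ^ 2) ^ j)) := by
    intro j
    set u : ℕ → ℝ := fun M => q M * (1 - q M) ^ j - q M with hu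
    have hS : Tendsto (fun M : ℕ => ∑ m ∈ range j, (1 - q M) ^ m) atTop (𝓝 (j : ℝ)) := by
      have h1 : Tendsto (fun M : ℕ => ∑ m ∈ range j, (1 - q M) ^ m) atTop
          (𝓝 (∑ m ∈ range j, (1 : ℝ))) := by
        apply tendsto_finset_sum
        intro m _
        have h0 : Tendsto (fun M : ℕ => (1 : ℝ) - q M) atTop (𝓝 (1 - 0)) :=
          tendsto_const_nhds.sub hq0
        have := h0.pow m
        simpa using this
      simpa using h1
    have hMu : Tendsto (fun M : ℕ => (M : ℝ) * u M) atTop (𝓝 ((j : ℝ) * (-a ^ 2))) := by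
      have h2 := hS.const_mul (-a ^ 2)
      have h3 : Tendsto (fun M : ℕ => -a ^ 2 * ∑ m ∈ range j, (1 - q M) ^ m) atTop
          (𝓝 ((j : ℝ) * (-a ^ 2))) := by
        convert h2 using 2
        ring
      apply h3.congr'
      filter_upwards [eventually_ge_atTop 1] with M hM
      have hM0 : (0 : ℝ) < (M : ℝ) := by exact_mod_cast hM
      have hsq : (M : ℝ) * q M ^ 2 = a ^ 2 := by
        rw [hq]
        simp only [div_pow, Real.sq_sqrt hM0.le]
        field_simp
      have hgeom := geom_sum_mul (1 - q M) j
      simp only [hu]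
      linear_combination ((M : ℝ) * q M) * hgeom + (∑ m ∈ range j, (1 - q M) ^ m) * hsq
    have h4 := key_pow_exp u ((j : ℝ) * (-a ^ 2)) hMu
    rw [Real.exp_nat_mul] at h4
    apply h4.congr
    intro M
    congr 1
    simp only [hu]
    ring
  -- algebraic identity: binomial expansion
  have hA : ∀ M : ℕ,
      ∑ n ∈ Finset.range (M + 1),
        (M.choose n : ℝ) * q M ^ n * (1 - q M) ^ (M - n) *
          (1 - (1 - q M) ^ n) ^ k * ((1 - q M) ^ n) ^ (L - k)
      = ∑ i ∈ Finset.range (k + 1),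
        (k.choose i : ℝ) * (-1) ^ i * (q M * (1 - q M) ^ (i + (L - k)) + (1 - q M)) ^ M := by
    intro M
    have h1 : ∀ n : ℕ, (1 - (1 - q M) ^ n) ^ k
        = ∑ i ∈ range (k + 1), (-1 : ℝ) ^ i * ((1 - q M) ^ n) ^ i * (k.choose i : ℝ) := by
      intro n
      rw [show (1 - (1 - q M) ^ n : ℝ) = -((1 - q M) ^ n) + 1 by ring, add_pow]
      apply Finset.sum_congr rfl
      intro i _
      rw [neg_pow]
      ring
    simp_rw [h1, Finset.mul_sum, Finset.sum_mul]
    rw [Finset.sum_comm]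
    apply Finset.sum_congr rfl
    intro i _
    rw [add_pow, Finset.mul_sum]
    apply Finset.sum_congr rfl
    intro n _
    rw [mul_pow, ← pow_mul, ← pow_mul, ← pow_mul]
    ring
  -- final target as a sum
  have hsumval : (1 - Real.exp (-a ^ 2)) ^ k * (Real.exp (-a ^ 2)) ^ (L - k)
      = ∑ i ∈ Finset.range (k + 1),
        (k.choose i : ℝ) * (-1) ^ i * (Real.exp (-a ^ 2)) ^ (i + (L - k)) := by
    rw [show (1 - Real.exp (-a ^ 2) : ℝ) = -Real.exp (-a ^ 2) + 1 by ring, add_pow,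
      Finset.sum_mul]
    apply Finset.sum_congr rfl
    intro i _
    rw [pow_add, neg_pow]
    ring
  rw [hsumval]
  have hfin : Tendsto (fun M : ℕ => ∑ i ∈ Finset.range (k + 1),
      (k.choose i : ℝ) * (-1) ^ i * (q M * (1 - q M) ^ (i + (L - k)) + (1 - q M)) ^ M) atTop
      (𝓝 (∑ i ∈ Finset.range (k + 1),
        (k.choose i : ℝ) * (-1) ^ i * (Real.exp (-a ^ 2)) ^ (i + (L - k)))) := by
    apply tendsto_finset_sum
    intro i _
    exact (hB (i + (L - k))).const_mul _
  exact hfin.congr (fun M => (hA M).symm)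
end

section
/- Let C > 1 be real, let a = √(1 + 8/C), and let q* = (1/4)·[a + 1 - √(3 + 2a - a²)]. Then 3 + 2a - a² ≥ 0, q* ∈ (0,1), q* satisfies C²q*⁴ - C²q*³ - Cq* + 1 = 0, and q* is the unique root of the polynomial C²q⁴ - C²q³ - Cq + 1 in the interval [0,1]. -/
/-!
With `a = √(1 + 8/C)` we have `C (a² - 1) = 8`, and this makes the quartic factor as
`(C q² - C (a+1)/2 · q + 1) (C q² + C (a-1)/2 · q + 1)`. For `q ≥ 0` the second factor is positive
since `a > 1`. The first has discriminant `(C s / 2)²` with `s² = 3 + 2a - a² = (a+1)(3-a)`,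
so its roots are `(a + 1 ∓ s)/4`; for `1 < a < 3` we have `3 - a < s < a + 1`, which puts the
smaller root in `(0, 1)` and the larger one above `1`.
-/

open Real

section Factorization

variable {C a : ℝ}

theorem quartic_eq_mul (h : C * (a ^ 2 - 1) = 8) (q : ℝ) :
    C ^ 2 * q ^ 4 - C ^ 2 * q ^ 3 - C * q + 1 =
      (C * q ^ 2 - C * (a + 1) / 2 * q + 1) * (C * q ^ 2 + C * (a - 1) / 2 * q + 1) := by
  linear_combination (C * q ^ 2 / 4) * h

theorem quartic_cofactor_pos (hC : 0 < C) (ha : 1 < a) {q : ℝ} (hq : 0 ≤ q) :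
    0 < C * q ^ 2 + C * (a - 1) / 2 * q + 1 := by
  have : 0 ≤ C * (a - 1) / 2 * q := by
    have : 0 < a - 1 := sub_pos.mpr ha
    positivity
  positivity

theorem quartic_factor_eq_zero_iff (hC : C ≠ 0) (h : C * (a ^ 2 - 1) = 8) {s : ℝ}
    (hs : s ^ 2 = 3 + 2 * a - a ^ 2) (q : ℝ) :
    C * q ^ 2 - C * (a + 1) / 2 * q + 1 = 0 ↔
      q = 1 / 4 * (a + 1 + s) ∨ q = 1 / 4 * (a + 1 - s) := by
  have hdiscrim : discrim C (-(C * (a + 1) / 2)) 1 = (C * s / 2) * (C * s / 2) := by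
    rw [discrim]
    linear_combination (-C ^ 2 / 4) * hs + (C / 2) * h
  have hroots := quadratic_eq_zero_iff hC hdiscrim q
  rw [show C * q ^ 2 - C * (a + 1) / 2 * q + 1 = C * (q * q) + -(C * (a + 1) / 2) * q + 1 by ring,
    hroots]
  congr! 2 <;> field_simp <;> ring

end Factorization

theorem one_lt_sqrt_one_add_eight_div {C : ℝ} (hC : 0 < C) : 1 < √(1 + 8 / C) := by
  rw [Real.lt_sqrt zero_le_one]
  have : 0 < 8 / C := by positivity
  linarith

theorem sqrt_one_add_eight_div_lt_three {C : ℝ} (hC : 1 < C) : √(1 + 8 / C) < 3 := by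
  have : 8 / C < 8 := by
    rw [div_lt_iff₀ (by linarith)]
    linarith
  rw [Real.sqrt_lt' three_pos]
  linarith

theorem sqrt_three_add_two_mul_sub_sq_mem_Ioo {a : ℝ} (h1 : 1 < a) (h3 : a < 3) :
    √(3 + 2 * a - a ^ 2) ∈ Set.Ioo (3 - a) (a + 1) := by
  constructor
  · rw [Real.lt_sqrt (by linarith)]
    nlinarith
  · rw [Real.sqrt_lt' (by linarith)]
    nlinarith

theorem two_layer_threshold_root (C : ℝ) (hC : 1 < C) :
    0 ≤ 3 + 2 * Real.sqrt (1 + 8 / C) - Real.sqrt (1 + 8 / C) ^ 2 ∧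
    (1 / 4) * (Real.sqrt (1 + 8 / C) + 1 -
        Real.sqrt (3 + 2 * Real.sqrt (1 + 8 / C) - Real.sqrt (1 + 8 / C) ^ 2)) ∈
      Set.Ioo (0:ℝ) 1 ∧
    (C ^ 2 * ((1 / 4) * (Real.sqrt (1 + 8 / C) + 1 -
          Real.sqrt (3 + 2 * Real.sqrt (1 + 8 / C) - Real.sqrt (1 + 8 / C) ^ 2))) ^ 4 -
      C ^ 2 * ((1 / 4) * (Real.sqrt (1 + 8 / C) + 1 -
          Real.sqrt (3 + 2 * Real.sqrt (1 + 8 / C) - Real.sqrt (1 + 8 / C) ^ 2))) ^ 3 -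
      C * ((1 / 4) * (Real.sqrt (1 + 8 / C) + 1 -
          Real.sqrt (3 + 2 * Real.sqrt (1 + 8 / C) - Real.sqrt (1 + 8 / C) ^ 2))) + 1 = 0) ∧
    (∀ q ∈ Set.Icc (0:ℝ) 1, C ^ 2 * q ^ 4 - C ^ 2 * q ^ 3 - C * q + 1 = 0 →
      q = (1 / 4) * (Real.sqrt (1 + 8 / C) + 1 -
          Real.sqrt (3 + 2 * Real.sqrt (1 + 8 / C) - Real.sqrt (1 + 8 / C) ^ 2))) := by
  have hC0 : 0 < C := by linarith
  set a := √(1 + 8 / C)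
  have ha : C * (a ^ 2 - 1) = 8 := by
    rw [Real.sq_sqrt (by positivity)]
    field_simp
    ring
  have ha1 := one_lt_sqrt_one_add_eight_div hC0
  have ha3 := sqrt_one_add_eight_div_lt_three hC
  have hdisc : 0 ≤ 3 + 2 * a - a ^ 2 := by nlinarith
  obtain ⟨hs3, hs1⟩ := sqrt_three_add_two_mul_sub_sq_mem_Ioo ha1 ha3
  have hroots := quartic_factor_eq_zero_iff hC0.ne' ha (Real.sq_sqrt hdisc)
  refine ⟨hdisc, ⟨by linarith, by linarith⟩, ?_, fun q hq hroot => ?_⟩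
  · rw [quartic_eq_mul ha, ((hroots _).mpr (Or.inr rfl)), zero_mul]
  · rw [quartic_eq_mul ha, mul_eq_zero,
      or_iff_left (quartic_cofactor_pos hC0 ha1 hq.1).ne', hroots] at hroot
    rcases hroot with hbig | hsmall
    · linarith [hq.2]
    · exact hsmall
end

section
/- Let M ≥ 1 be an integer and C a real. Then det(A(0)) = 1 and det(A(1)) = 1 - C. Consequently, if C > 1, then there exists q ∈ (0,1) with det(A(q)) = 0. -/
open Matrix

/-- The matrix `A(q)` from the multilayer random-graph analysis: for `i, j ∈ {1, …, M}`
(represented by `Fin M` via `i ↦ i+1`),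
`A_{ij} = [i = j] - C (C(M, j) - C(M - i, j)) q^j (1-q)^(M-j)`,
where binomial coefficients `C(a,b)` vanish for `b > a`. -/
def multilayerMatrix (M : ℕ) (C q : ℝ) : Matrix (Fin M) (Fin M) ℝ :=
  fun i j =>
    (if i = j then (1 : ℝ) else 0) -
      C * ((Nat.choose M (j.1 + 1) : ℝ) - (Nat.choose (M - (i.1 + 1)) (j.1 + 1) : ℝ)) *
        q ^ (j.1 + 1) * (1 - q) ^ (M - (j.1 + 1))

lemma multilayerMatrix_zero_eq : ∀ M (C : ℝ), (multilayerMatrix M C 0) = 1 := by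
  intro M C
  ext i j
  simp [multilayerMatrix, Matrix.one_apply]

lemma multilayerMatrix_det_one (M : ℕ) (hM : 1 ≤ M) (C : ℝ) :
    (multilayerMatrix M C 1).det = 1 - C := by
  have htri : (multilayerMatrix M C 1).BlockTriangular id := by
    intro i j hij
    simp only [id] at hij
    have h1 : M - (j.1 + 1) ≠ 0 := by omega
    have : i ≠ j := ne_of_gt hij
    simp [multilayerMatrix, this, zero_pow h1]
  rw [Matrix.det_of_upperTriangular htri]
  have hlast : (⟨M - 1, by omega⟩ : Fin M) ∈ Finset.univ := Finset.mem_univ _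
  rw [Finset.prod_eq_single_of_mem (⟨M - 1, by omega⟩ : Fin M) hlast]
  · have h1 : M - (M - 1 + 1) = 0 := by omega
    have h2 : M - 1 + 1 = M := by omega
    have h3 : Nat.choose 0 M = 0 := Nat.choose_eq_zero_of_lt (by omega)
    simp [multilayerMatrix, h1, h2, h3, Nat.choose_self]
  · intro i _ hi
    have h1 : M - (i.1 + 1) ≠ 0 := by
      have : i.1 ≠ M - 1 := fun h => hi (Fin.ext h)
      have := i.2; omega
    simp [multilayerMatrix, zero_pow h1]

theorem det_multilayer_matrix_endpoints (M : ℕ) (hM : 1 ≤ M) (C : ℝ) :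
    (multilayerMatrix M C 0).det = 1 ∧
    (multilayerMatrix M C 1).det = 1 - C ∧
    (1 < C → ∃ q ∈ Set.Ioo (0:ℝ) 1, (multilayerMatrix M C q).det = 0) := by
  refine ⟨by rw [multilayerMatrix_zero_eq]; exact Matrix.det_one,
    multilayerMatrix_det_one M hM C, ?_⟩
  intro hC
  have hcont : Continuous (fun q : ℝ => (multilayerMatrix M C q).det) := by
    apply Continuous.matrix_det
    apply continuous_matrix
    intro i j
    unfold multilayerMatrix
    fun_prop
  have := intermediate_value_Ioo' zero_le_one hcont.continuousOn (a := 0) (b := 1)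
    (f := fun q : ℝ => (multilayerMatrix M C q).det)
  have hmem : (0:ℝ) ∈ Set.Ioo ((multilayerMatrix M C 1).det) ((multilayerMatrix M C 0).det) := by
    rw [multilayerMatrix_zero_eq, Matrix.det_one, multilayerMatrix_det_one M hM C]
    constructor <;> linarith
  obtain ⟨q, hq, hdet⟩ := this hmem
  exact ⟨q, hq, hdet⟩
end

section
/- For every integer M ≥ 1 and every real q ∈ [0,1], g_M(q) ≤ 0, where g_M(q) = (3/2)(3q-4)(1-2q²+q³)^{M-1} + 3(1-q)(1-3q²+2q³)^{M-1} + (1-q²)^{M-1} - 1. -/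
theorem kagome_g_nonpositive (M : ℕ) (hM : 1 ≤ M) (q : ℝ) (hq : q ∈ Set.Icc (0:ℝ) 1) :
    (3 / 2) * (3 * q - 4) * (1 - 2 * q ^ 2 + q ^ 3) ^ (M - 1) +
        3 * (1 - q) * (1 - 3 * q ^ 2 + 2 * q ^ 3) ^ (M - 1) +
        (1 - q ^ 2) ^ (M - 1) - 1 ≤ 0 := by
  obtain ⟨hq0, hq1⟩ := hq
  set n := M - 1 with hn
  have hB : (0:ℝ) ≤ 1 - 3 * q ^ 2 + 2 * q ^ 3 := by nlinarith [sq_nonneg (1 - q), sq_nonneg q]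
  have hBA : (1:ℝ) - 3 * q ^ 2 + 2 * q ^ 3 ≤ 1 - 2 * q ^ 2 + q ^ 3 := by nlinarith [sq_nonneg q]
  have hA : (0:ℝ) ≤ 1 - 2 * q ^ 2 + q ^ 3 := le_trans hB hBA
  have hC0 : (0:ℝ) ≤ 1 - q ^ 2 := by nlinarith
  have hC1 : (1:ℝ) - q ^ 2 ≤ 1 := by nlinarith
  have hb : (1 - 3 * q ^ 2 + 2 * q ^ 3) ^ n ≤ (1 - 2 * q ^ 2 + q ^ 3) ^ n :=
    pow_le_pow_left₀ hB hBA n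
  have ha : (0:ℝ) ≤ (1 - 2 * q ^ 2 + q ^ 3) ^ n := pow_nonneg hA n
  have hc : (1 - q ^ 2) ^ n ≤ 1 := pow_le_one₀ hC0 hC1
  nlinarith [mul_nonneg (by linarith : (0:ℝ) ≤ 1 - q)
      (sub_nonneg.mpr hb),
    mul_nonneg (by linarith : (0:ℝ) ≤ 2 - q) ha]
end

section
/- For every integer M ≥ 1: f_M(0) = 1, f_M(1) = -M, f_M is strictly decreasing on the interval [0,1], and f_M has exactly one root in the open interval (0,1). -/
/-!
With `A = 1 - 2q² + q³`, `C = 1 - 3q² + 2q³` and `D = 1 - q²`, one has `f_M = 3A^M - C^M - D^M - Mq²`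
and `f_M' = M q (3(3q - 4) A^(M-1) + 6(1 - q) C^(M-1) + 2 D^(M-1) - 2)`. On `(0, 1)` the bounds
`0 ≤ C ≤ A` (as `A - C = q²(1 - q)`) and `D ≤ 1` make the bracket at most `3(q - 2) A^(M-1) < 0`,
so `f_M` decreases strictly from `f_M(0) = 1` to `f_M(1) = -M`, and the intermediate value theorem
gives the unique root.
-/

open Set

theorem StrictAntiOn.existsUnique_zero_Ioo {f : ℝ → ℝ} {a b : ℝ} (hab : a ≤ b)
    (hf : StrictAntiOn f (Icc a b)) (hcont : ContinuousOn f (Icc a b)) (ha : 0 < f a)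
    (hb : f b < 0) : ∃! x, x ∈ Ioo a b ∧ f x = 0 := by
  obtain ⟨x, hx, hfx⟩ := intermediate_value_Ioo' hab hcont ⟨hb, ha⟩
  refine ⟨x, ⟨hx, hfx⟩, fun y ⟨hy, hfy⟩ => ?_⟩
  exact hf.injOn (Ioo_subset_Icc_self hy) (Ioo_subset_Icc_self hx) (hfy.trans hfx.symm)

noncomputable def kagomeF (M : ℕ) (q : ℝ) : ℝ :=
  ((1 - q) * (1 + q - q ^ 2)) ^ M + 2 * (1 - 2 * q ^ 2 + q ^ 3) ^ M -
    ((1 - q) ^ 2 * (1 + 2 * q)) ^ M - (1 - q ^ 2) ^ M - (M : ℝ) * q ^ 2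

namespace kagomeF

variable {M : ℕ}

theorem apply_zero : kagomeF M 0 = 1 := by
  norm_num [kagomeF]

theorem apply_one (hM : M ≠ 0) : kagomeF M 1 = -M := by
  norm_num [kagomeF, zero_pow hM]

theorem eq_three_mul_pow_sub (q : ℝ) :
    kagomeF M q =
      3 * (1 - 2 * q ^ 2 + q ^ 3) ^ M - (1 - 3 * q ^ 2 + 2 * q ^ 3) ^ M - (1 - q ^ 2) ^ M
        - M * q ^ 2 := by
  unfold kagomeF
  ring

theorem hasDerivAt (M : ℕ) (q : ℝ) :
    HasDerivAt (kagomeF M)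
      (M * q * (3 * (3 * q - 4) * (1 - 2 * q ^ 2 + q ^ 3) ^ (M - 1)
        + 6 * (1 - q) * (1 - 3 * q ^ 2 + 2 * q ^ 3) ^ (M - 1) + 2 * (1 - q ^ 2) ^ (M - 1) - 2)) q := by
  have hA : HasDerivAt (fun x : ℝ => 1 - 2 * x ^ 2 + x ^ 3) (q * (3 * q - 4)) q :=
    (((hasDerivAt_pow 2 q).const_mul 2).const_sub 1).fun_add (hasDerivAt_pow 3 q) |>.congr_deriv
      (by norm_num; ring)
  have hC : HasDerivAt (fun x : ℝ => 1 - 3 * x ^ 2 + 2 * x ^ 3) (-(6 * q * (1 - q))) q :=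
    (((hasDerivAt_pow 2 q).const_mul 3).const_sub 1).fun_add ((hasDerivAt_pow 3 q).const_mul 2)
      |>.congr_deriv (by norm_num; ring)
  have hD : HasDerivAt (fun x : ℝ => 1 - x ^ 2) (-(2 * q)) q :=
    ((hasDerivAt_pow 2 q).const_sub 1).congr_deriv (by norm_num)
  rw [show kagomeF M = _ from funext fun x => eq_three_mul_pow_sub x]
  exact ((((hA.pow M).const_mul 3).fun_sub (hC.pow M)).fun_sub (hD.pow M)).fun_sub
    ((hasDerivAt_pow 2 q).const_mul (M : ℝ)) |>.congr_deriv (by norm_num; ring)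

theorem deriv_bracket_neg {q a c d : ℝ} (hq : q < 1) (ha : 0 < a) (hca : c ≤ a)
    (hd : d ≤ 1) : 3 * (3 * q - 4) * a + 6 * (1 - q) * c + 2 * d - 2 < 0 := by
  nlinarith [mul_le_mul_of_nonneg_left hca (by linarith : (0 : ℝ) ≤ 6 * (1 - q))]

theorem deriv_lt_zero (hM : M ≠ 0) {q : ℝ} (hq : q ∈ Ioo (0 : ℝ) 1) :
    deriv (kagomeF M) q < 0 := by
  obtain ⟨hq0, hq1⟩ := hq
  have h1q : 0 < 1 - q := by linarith
  rw [(hasDerivAt M q).deriv]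
  refine mul_neg_of_pos_of_neg (by positivity) (deriv_bracket_neg hq1 ?_ ?_ ?_)
  · exact pow_pos (by nlinarith [mul_pos h1q (by nlinarith : 0 < 1 + q - q ^ 2)]) _
  · refine pow_le_pow_left₀ ?_ (by nlinarith [mul_nonneg (sq_nonneg q) h1q.le]) _
    nlinarith [mul_nonneg (mul_nonneg h1q.le h1q.le) (by linarith : (0 : ℝ) ≤ 1 + 2 * q)]
  · exact pow_le_one₀ (by nlinarith) (by nlinarith)

theorem strictAntiOn (hM : M ≠ 0) : StrictAntiOn (kagomeF M) (Icc 0 1) :=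
  strictAntiOn_of_deriv_neg (convex_Icc 0 1)
    (fun x _ => (hasDerivAt M x).continuousAt.continuousWithinAt)
    fun _ hx => deriv_lt_zero hM (by rwa [interior_Icc] at hx)

end kagomeF

theorem kagome_f_unique_root (M : ℕ) (hM : 1 ≤ M) :
    (fun q : ℝ =>
        ((1 - q) * (1 + q - q ^ 2)) ^ M + 2 * (1 - 2 * q ^ 2 + q ^ 3) ^ M -
          ((1 - q) ^ 2 * (1 + 2 * q)) ^ M - (1 - q ^ 2) ^ M - (M : ℝ) * q ^ 2) 0 = 1 ∧
    (fun q : ℝ =>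
        ((1 - q) * (1 + q - q ^ 2)) ^ M + 2 * (1 - 2 * q ^ 2 + q ^ 3) ^ M -
          ((1 - q) ^ 2 * (1 + 2 * q)) ^ M - (1 - q ^ 2) ^ M - (M : ℝ) * q ^ 2) 1 = -(M : ℝ) ∧
    StrictAntiOn
      (fun q : ℝ =>
        ((1 - q) * (1 + q - q ^ 2)) ^ M + 2 * (1 - 2 * q ^ 2 + q ^ 3) ^ M -
          ((1 - q) ^ 2 * (1 + 2 * q)) ^ M - (1 - q ^ 2) ^ M - (M : ℝ) * q ^ 2)
      (Set.Icc (0:ℝ) 1) ∧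
    (∃! q : ℝ, q ∈ Set.Ioo (0:ℝ) 1 ∧
        ((1 - q) * (1 + q - q ^ 2)) ^ M + 2 * (1 - 2 * q ^ 2 + q ^ 3) ^ M -
          ((1 - q) ^ 2 * (1 + 2 * q)) ^ M - (1 - q ^ 2) ^ M - (M : ℝ) * q ^ 2 = 0) := by
  have hM0 : M ≠ 0 := Nat.one_le_iff_ne_zero.mp hM
  have hanti := kagomeF.strictAntiOn hM0
  have hroot : ∃! q, q ∈ Ioo 0 1 ∧ kagomeF M q = 0 := by
    refine hanti.existsUnique_zero_Ioo zero_le_one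
      (fun x _ => (kagomeF.hasDerivAt M x).continuousAt.continuousWithinAt) ?_ ?_
    · rw [kagomeF.apply_zero]; exact one_pos
    · rw [kagomeF.apply_one hM0, neg_lt_zero]; exact_mod_cast hM
  exact ⟨kagomeF.apply_zero, kagomeF.apply_one hM0, hanti, hroot⟩
end

section
/- Let C > 1 be a real and M ≥ 1 an integer. Then the function G_M(q) = (1-q²)^M - (1/C)(1-q)^M + 1/C - 1 has exactly one zero in the half-open interval (0,1], and this zero lies in the open interval (0,1). Moreover G_M(0) = 0 and G_M(1) = 1/C - 1 < 0. -/
/-!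
Writing `c = 1/C`, the derivative of `G_M` is `M (1-q)^(M-1) (c - 2q(1+q)^(M-1))`. The second
factor changes sign exactly once in `(0,1)`, at the point `s` where the increasing function
`2q(1+q)^(M-1)` crosses `c`, so `G_M` rises from `G_M(0) = 0` on `[0,s]` and falls to
`G_M(1) = c - 1 < 0` on `[s,1]`. Hence its only zero in `(0,1]` lies in `(s,1)`.
-/

open Set

theorem existsUnique_zero_of_strictMonoOn_of_strictAntiOn {f : ℝ → ℝ} {a s b : ℝ}
    (has : a < s) (hsb : s ≤ b) (hf : ContinuousOn f (Icc s b))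
    (hmono : StrictMonoOn f (Icc a s)) (hanti : StrictAntiOn f (Icc s b))
    (ha : f a = 0) (hb : f b < 0) : ∃! x, x ∈ Ioc a b ∧ f x = 0 := by
  have hpos_of_le {y : ℝ} (hay : a < y) (hys : y ≤ s) : 0 < f y :=
    ha ▸ hmono (left_mem_Icc.2 has.le) ⟨hay.le, hys⟩ hay
  obtain ⟨r, hr, hfr⟩ := intermediate_value_Ioo' hsb hf ⟨hb, hpos_of_le has le_rfl⟩
  refine ⟨r, ⟨⟨has.trans hr.1, hr.2.le⟩, hfr⟩, ?_⟩
  rintro y ⟨⟨hay, hyb⟩, hfy⟩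
  have hsy : s ≤ y := not_lt.1 fun hys => (hpos_of_le hay hys.le).ne' hfy
  exact hanti.injOn ⟨hsy, hyb⟩ (Ioo_subset_Icc_self hr) (hfy.trans hfr.symm)

theorem strictMonoOn_mul_one_add_pow (n : ℕ) :
    StrictMonoOn (fun q : ℝ => q * (1 + q) ^ n) (Ici 0) := by
  intro a ha b hb hab
  have ha' : (0 : ℝ) ≤ a := ha
  exact mul_lt_mul hab (pow_le_pow_left₀ (by linarith) (by linarith) n)
    (pow_pos (by linarith) n) (by linarith)

/-- `G_M` with `c` in place of `1/C`. -/
def siteBondG (c : ℝ) (M : ℕ) (q : ℝ) : ℝ :=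
  (1 - q ^ 2) ^ M - c * (1 - q) ^ M + c - 1

namespace siteBondG

variable (c : ℝ) (M : ℕ)

theorem continuous : Continuous (siteBondG c M) := by
  unfold siteBondG
  fun_prop

theorem apply_zero : siteBondG c M 0 = 0 := by
  simp [siteBondG]

theorem apply_one (hM : M ≠ 0) : siteBondG c M 1 = c - 1 := by
  simp [siteBondG, zero_pow hM]

theorem hasDerivAt (q : ℝ) :
    HasDerivAt (siteBondG c M) (M * (1 - q) ^ (M - 1) * (c - 2 * q * (1 + q) ^ (M - 1))) q := by
  have hsq : HasDerivAt (fun q : ℝ => (1 - q ^ 2) ^ M)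
      (M * (1 - q ^ 2) ^ (M - 1) * -(2 * q)) q := by
    simpa using ((hasDerivAt_pow 2 q).const_sub 1).fun_pow M
  have hlin : HasDerivAt (fun q : ℝ => (1 - q) ^ M) (M * (1 - q) ^ (M - 1) * -1) q := by
    simpa using ((hasDerivAt_id q).const_sub 1).fun_pow M
  refine (((hsq.sub (hlin.const_mul c)).add_const c).sub_const 1).congr_deriv ?_
  rw [show 1 - q ^ 2 = (1 - q) * (1 + q) by ring, mul_pow]
  ring

variable {c M}

theorem strictMonoOn {s : ℝ} (hM : M ≠ 0) (hs1 : s ≤ 1) (hcs : c = 2 * s * (1 + s) ^ (M - 1)) :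
    StrictMonoOn (siteBondG c M) (Icc 0 s) := by
  refine strictMonoOn_of_deriv_pos (convex_Icc 0 s) (continuous c M).continuousOn ?_
  intro x hx
  rw [interior_Icc] at hx
  obtain ⟨hx0, hxs⟩ := hx
  rw [(hasDerivAt c M x).deriv]
  have hlt : x * (1 + x) ^ (M - 1) < s * (1 + s) ^ (M - 1) :=
    strictMonoOn_mul_one_add_pow _ hx0.le (hx0.trans hxs).le hxs
  have hx1 : 0 < 1 - x := by linarith
  have hMpos : (0 : ℝ) < M := by exact_mod_cast Nat.pos_of_ne_zero hM
  exact mul_pos (mul_pos hMpos (pow_pos hx1 _)) (by linarith)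

theorem strictAntiOn {s : ℝ} (hM : M ≠ 0) (hs0 : 0 ≤ s) (hcs : c = 2 * s * (1 + s) ^ (M - 1)) :
    StrictAntiOn (siteBondG c M) (Icc s 1) := by
  refine strictAntiOn_of_deriv_neg (convex_Icc s 1) (continuous c M).continuousOn ?_
  intro x hx
  rw [interior_Icc] at hx
  obtain ⟨hsx, hx1⟩ := hx
  rw [(hasDerivAt c M x).deriv]
  have hlt : s * (1 + s) ^ (M - 1) < x * (1 + x) ^ (M - 1) :=
    strictMonoOn_mul_one_add_pow _ hs0 (hs0.trans hsx.le) hsx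
  have hMpos : (0 : ℝ) < M := by exact_mod_cast Nat.pos_of_ne_zero hM
  exact mul_neg_of_pos_of_neg (mul_pos hMpos (pow_pos (by linarith) _)) (by linarith)

theorem exists_turningPoint (hc0 : 0 < c) (hc2 : c < 2) :
    ∃ s ∈ Ioo (0 : ℝ) 1, c = 2 * s * (1 + s) ^ (M - 1) := by
  have hcont : ContinuousOn (fun q : ℝ => 2 * q * (1 + q) ^ (M - 1)) (Icc 0 1) := by fun_prop
  have htop : (2 : ℝ) ≤ 2 * 1 * (1 + 1) ^ (M - 1) := by
    norm_num [one_le_pow₀]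
  obtain ⟨s, hs, hcs⟩ := intermediate_value_Ioo zero_le_one hcont ⟨by simpa using hc0, by linarith⟩
  exact ⟨s, hs, hcs.symm⟩

theorem existsUnique_zero (hM : M ≠ 0) (hc0 : 0 < c) (hc1 : c < 1) :
    ∃! q, q ∈ Ioc (0 : ℝ) 1 ∧ siteBondG c M q = 0 := by
  obtain ⟨s, hs, hcs⟩ := exists_turningPoint (M := M) hc0 (by linarith)
  exact existsUnique_zero_of_strictMonoOn_of_strictAntiOn hs.1 hs.2.le
    (continuous c M).continuousOn (strictMonoOn hM hs.2.le hcs) (strictAntiOn hM hs.1.le hcs)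
    (apply_zero c M) (by rw [apply_one c M hM]; linarith)

end siteBondG

theorem random_graph_sitebond_unique_root (C : ℝ) (hC : 1 < C) (M : ℕ) (hM : 1 ≤ M) :
    (∃! q : ℝ, q ∈ Set.Ioc (0:ℝ) 1 ∧
        (1 - q ^ 2) ^ M - (1 / C) * (1 - q) ^ M + 1 / C - 1 = 0) ∧
    (∀ q ∈ Set.Ioc (0:ℝ) 1,
        (1 - q ^ 2) ^ M - (1 / C) * (1 - q) ^ M + 1 / C - 1 = 0 → q ∈ Set.Ioo (0:ℝ) 1) ∧
    (1 - (0:ℝ) ^ 2) ^ M - (1 / C) * (1 - (0:ℝ)) ^ M + 1 / C - 1 = 0 ∧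
    (1 - (1:ℝ) ^ 2) ^ M - (1 / C) * (1 - (1:ℝ)) ^ M + 1 / C - 1 = 1 / C - 1 ∧
    1 / C - 1 < 0 := by
  have hM0 : M ≠ 0 := Nat.one_le_iff_ne_zero.1 hM
  have hc0 : 0 < 1 / C := by positivity
  have hc1 : 1 / C < 1 := (div_lt_one (by positivity)).2 hC
  have hG1 : siteBondG (1 / C) M 1 = 1 / C - 1 := siteBondG.apply_one _ M hM0
  refine ⟨siteBondG.existsUnique_zero hM0 hc0 hc1, ?_, siteBondG.apply_zero _ M, hG1,
    by linarith⟩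
  rintro q ⟨hq0, hq1⟩ hGq
  refine ⟨hq0, hq1.lt_of_ne ?_⟩
  rintro rfl
  exact (show siteBondG (1 / C) M 1 < 0 by linarith).ne hGq
end

section
/- For every integer M ≥ 2 and every real q ∈ (0,1), ν_M(q) < 0, where ν_M(q) = 1 - q(1+q)^{M-1} - (1-q)(1-q²)^{M-1}. In particular ν_2(q) = -q³. -/
lemma key_lemma (N : ℕ) (q : ℝ) (hq0 : 0 < q) (hq1 : q < 1) :
    1 < (1 + q) ^ (N + 1) * (q + (1 - q) ^ (N + 2)) := by
  induction N with
  | zero =>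
      have h : (1 + q) ^ (0 + 1) * (q + (1 - q) ^ (0 + 2)) = 1 + q ^ 3 := by ring
      rw [h]; nlinarith [pow_pos hq0 3]
  | succ n ih =>
      have h1 : (0:ℝ) ≤ 1 - q := by linarith
      have h2 : (1 - q) ^ (n + 2) ≤ 1 := pow_le_one₀ h1 (by linarith)
      have h3 : (0:ℝ) < (1 + q) ^ (n + 1) := pow_pos (by linarith) _
      have hdiff : (1 + q) ^ (n + 2) * (q + (1 - q) ^ (n + 3))
          - (1 + q) ^ (n + 1) * (q + (1 - q) ^ (n + 2))
          = (1 + q) ^ (n + 1) * (q ^ 2 * (1 - (1 - q) ^ (n + 2))) := by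
        rw [pow_succ (1 + q) (n + 1), pow_succ (1 - q) (n + 2)]
        ring
      nlinarith [mul_nonneg (le_of_lt h3) (mul_nonneg (sq_nonneg q) (by linarith : (0:ℝ) ≤ 1 - (1 - q) ^ (n + 2)))]

theorem nu_negative (M : ℕ) (hM : 2 ≤ M) :
    (∀ q ∈ Set.Ioo (0:ℝ) 1,
        1 - q * (1 + q) ^ (M - 1) - (1 - q) * (1 - q ^ 2) ^ (M - 1) < 0) ∧
    (∀ q : ℝ, 1 - q * (1 + q) ^ (2 - 1) - (1 - q) * (1 - q ^ 2) ^ (2 - 1) = -q ^ 3) := by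
  constructor
  · obtain ⟨N, rfl⟩ : ∃ N, M = N + 2 := ⟨M - 2, by omega⟩
    intro q ⟨hq0, hq1⟩
    have hMm : N + 2 - 1 = N + 1 := by omega
    rw [hMm]
    have key := key_lemma N q hq0 hq1
    have h1 : (1 - q ^ 2) ^ (N + 1) = (1 - q) ^ (N + 1) * (1 + q) ^ (N + 1) := by
      rw [← mul_pow]; ring_nf
    rw [h1]
    rw [pow_succ (1 - q) (N + 1)] at key
    nlinarith [key]
  · intro q; norm_num; ring
end

section
/- For every integer M ≥ 2, the function ψ_M(q) = (1-(1-q)^M)² / (1-(1-q²)^M) is strictly decreasing on the open interval (0,1); that is, for all 0 < q₁ < q₂ < 1, ψ_M(q₂) < ψ_M(q₁). Moreover ψ_M(1) = 1. -/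
/-!
Writing `a = 1 - q` and `b = 1 - q²`, the derivative of `ψ_M` has the sign of
`a^(M-1) (1 - b^M) - q (1 - a^M) b^(M-1)`. Since `1 - a = q` and `1 - b = q²`, the geometric
sums `S(x) = ∑_{j<M} x^j` turn this into `q² (a^(M-1) S(b) - b^(M-1) S(a))`, which is negative
because `x ↦ S(x) / x^(M-1) = ∑_{j<M} x^(-j)` is strictly decreasing and `0 < a < b`.
-/

open Finset

noncomputable def psi (M : ℕ) (q : ℝ) : ℝ :=
  (1 - (1 - q) ^ M) ^ 2 / (1 - (1 - q ^ 2) ^ M)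

section OrderedRing

variable {R : Type*} [CommRing R] [LinearOrder R] [IsStrictOrderedRing R]

theorem one_sub_pow_pos {x : R} (hx₀ : 0 ≤ x) (hx₁ : x < 1) {M : ℕ} (hM : M ≠ 0) :
    0 < 1 - x ^ M :=
  sub_pos.2 (pow_lt_one₀ hx₀ hx₁ hM)

theorem pow_mul_geom_sum_lt_pow_mul_geom_sum {a b : R} (ha : 0 < a) (hab : a < b) {n : ℕ}
    (hn : n ≠ 0) :
    a ^ n * ∑ j ∈ range (n + 1), b ^ j < b ^ n * ∑ j ∈ range (n + 1), a ^ j := by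
  rw [mul_sum, mul_sum]
  refine sum_lt_sum (fun j hj => ?_) ⟨0, by simp, by simpa using pow_lt_pow_left₀ hab ha.le hn⟩
  obtain ⟨k, rfl⟩ : ∃ k, n = j + k := Nat.exists_eq_add_of_le (Nat.lt_succ_iff.1 (mem_range.1 hj))
  have hb := ha.trans hab
  calc a ^ (j + k) * b ^ j = (a ^ j * b ^ j) * a ^ k := by ring
    _ ≤ (a ^ j * b ^ j) * b ^ k := by gcongr
    _ = b ^ (j + k) * a ^ j := by ring

theorem pow_mul_one_sub_pow_lt {q : R} (hq₀ : 0 < q) (hq₁ : q < 1) {M : ℕ} (hM : 2 ≤ M) :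
    (1 - q) ^ (M - 1) * (1 - (1 - q ^ 2) ^ M) < q * (1 - (1 - q) ^ M) * (1 - q ^ 2) ^ (M - 1) := by
  obtain ⟨n, rfl⟩ : ∃ n, M = n + 1 := ⟨M - 1, by omega⟩
  have hS (x : R) : 1 - x ^ (n + 1) = (1 - x) * ∑ j ∈ range (n + 1), x ^ j :=
    (mul_neg_geom_sum x _).symm
  rw [Nat.add_sub_cancel, hS (1 - q ^ 2), hS (1 - q)]
  have key := pow_mul_geom_sum_lt_pow_mul_geom_sum (a := 1 - q) (b := 1 - q ^ 2)
    (by linarith) (by nlinarith) (by omega : n ≠ 0)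
  calc (1 - q) ^ n * ((1 - (1 - q ^ 2)) * ∑ j ∈ range (n + 1), (1 - q ^ 2) ^ j)
      = q ^ 2 * ((1 - q) ^ n * ∑ j ∈ range (n + 1), (1 - q ^ 2) ^ j) := by ring
    _ < q ^ 2 * ((1 - q ^ 2) ^ n * ∑ j ∈ range (n + 1), (1 - q) ^ j) := by gcongr
    _ = _ := by ring

end OrderedRing

theorem hasDerivAt_one_sub_pow (M : ℕ) {f : ℝ → ℝ} {f' x : ℝ} (hf : HasDerivAt f f' x) :
    HasDerivAt (fun x => 1 - f x ^ M) (-(M * f x ^ (M - 1) * f')) x :=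
  (hf.fun_pow M).const_sub 1

theorem hasDerivAt_psi (M : ℕ) {q : ℝ} (hq : 1 - (1 - q ^ 2) ^ M ≠ 0) :
    HasDerivAt (psi M)
      (2 * M * (1 - (1 - q) ^ M) * ((1 - q) ^ (M - 1) * (1 - (1 - q ^ 2) ^ M)
        - q * (1 - (1 - q) ^ M) * (1 - q ^ 2) ^ (M - 1)) / (1 - (1 - q ^ 2) ^ M) ^ 2) q := by
  have hnum := (hasDerivAt_one_sub_pow M ((hasDerivAt_id' q).const_sub 1)).fun_pow 2
  have hden := hasDerivAt_one_sub_pow M (((hasDerivAt_id' q).fun_pow 2).const_sub 1)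
  refine (hnum.fun_div hden hq).congr_deriv ?_
  push_cast
  ring

theorem psi_strict_anti (M : ℕ) (hM : 2 ≤ M) :
    StrictAntiOn
      (fun q : ℝ => (1 - (1 - q) ^ M) ^ 2 / (1 - (1 - q ^ 2) ^ M))
      (Set.Ioo (0:ℝ) 1) ∧
    (1 - (1 - (1:ℝ)) ^ M) ^ 2 / (1 - (1 - (1:ℝ) ^ 2) ^ M) = 1 := by
  have hM₀ : M ≠ 0 := by omega
  refine ⟨?_, by norm_num [zero_pow hM₀]⟩
  have hden : ∀ q ∈ Set.Ioo (0:ℝ) 1, 0 < 1 - (1 - q ^ 2) ^ M := fun q ⟨h₀, h₁⟩ =>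
    one_sub_pow_pos (by nlinarith) (by nlinarith) hM₀
  have hderiv := fun q hq => hasDerivAt_psi M (hden q hq).ne'
  show StrictAntiOn (psi M) _
  refine strictAntiOn_of_deriv_neg (convex_Ioo 0 1)
    (fun q hq => (hderiv q hq).continuousAt.continuousWithinAt) fun q hq => ?_
  rw [interior_Ioo] at hq
  obtain ⟨h₀, h₁⟩ := hq
  rw [(hderiv q ⟨h₀, h₁⟩).deriv]
  refine div_neg_of_neg_of_pos (mul_neg_of_pos_of_neg ?_ ?_) (pow_pos (hden q ⟨h₀, h₁⟩) 2)
  · have := one_sub_pow_pos (x := 1 - q) (by linarith) (by linarith) hM₀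
    positivity
  · exact sub_neg.2 (pow_mul_one_sub_pow_lt h₀ h₁ hM)
end

section
/- Let p_c, q_c be reals with 0 < p_c ≤ q_c < 1, set A = (p_c - q_c)/(1-p_c) and B = p_c(1-q_c)/(1-p_c), and let M ≥ 2 be an integer. Then the function f_SB(q) = [1-(1-q²)^M]·[1-(1-q)^M + A] - B·[1-(1-q)^M]² has exactly one root in the open interval (0,1). -/
open Set

private lemma one_sub_pow_eq' (x : ℝ) (M : ℕ) :
    1 - x ^ M = (1 - x) * ∑ i ∈ Finset.range M, x ^ i := by
  linear_combination geom_sum_mul x M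

private lemma core_ineq (M : ℕ) (hM : 2 ≤ M) (q : ℝ) (hq0 : 0 < q) (hq1 : q < 1) :
    (1 - q) ^ (M - 1) * (1 - (1 - q ^ 2) ^ M) <
      q * (1 - q ^ 2) ^ (M - 1) * (1 - (1 - q) ^ M) := by
  have hT : 1 - (1 - q ^ 2) ^ M = q ^ 2 * ∑ i ∈ Finset.range M, (1 - q ^ 2) ^ i := by
    rw [one_sub_pow_eq' (1 - q ^ 2) M]; ring
  have hS : 1 - (1 - q) ^ M = q * ∑ i ∈ Finset.range M, (1 - q) ^ i := by
    rw [one_sub_pow_eq' (1 - q) M]; ring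
  have key : (∑ i ∈ Finset.range M, (1 - q ^ 2) ^ i)
      < (1 + q) ^ (M - 1) * ∑ i ∈ Finset.range M, (1 - q) ^ i := by
    rw [Finset.mul_sum]
    apply Finset.sum_lt_sum
    · intro i hi
      have hi' : i ≤ M - 1 := by have := Finset.mem_range.mp hi; omega
      rw [show (1:ℝ) - q ^ 2 = (1 - q) * (1 + q) by ring, mul_pow]
      have h2 : (1 + q) ^ i ≤ (1 + q) ^ (M - 1) :=
        pow_le_pow_right₀ (by linarith) hi'
      have h3 : (0:ℝ) ≤ (1 - q) ^ i := pow_nonneg (by linarith) i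
      nlinarith [h2, h3]
    · refine ⟨0, Finset.mem_range.mpr (by omega), ?_⟩
      simp only [pow_zero, mul_one]
      exact one_lt_pow₀ (by linarith) (by omega)
  have hfac : (1 - q ^ 2) ^ (M - 1) = (1 - q) ^ (M - 1) * (1 + q) ^ (M - 1) := by
    rw [show (1:ℝ) - q ^ 2 = (1 - q) * (1 + q) by ring, mul_pow]
  rw [hT, hS, hfac]
  have hpow : (0:ℝ) < (1 - q) ^ (M - 1) := pow_pos (by linarith) _
  calc (1 - q) ^ (M - 1) * (q ^ 2 * ∑ i ∈ Finset.range M, (1 - q ^ 2) ^ i)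
      = q ^ 2 * ((1 - q) ^ (M - 1) * ∑ i ∈ Finset.range M, (1 - q ^ 2) ^ i) := by ring
    _ < q ^ 2 * ((1 - q) ^ (M - 1) *
        ((1 + q) ^ (M - 1) * ∑ i ∈ Finset.range M, (1 - q) ^ i)) := by
        apply mul_lt_mul_of_pos_left _ (by positivity)
        exact mul_lt_mul_of_pos_left key hpow
    _ = q * ((1 - q) ^ (M - 1) * (1 + q) ^ (M - 1)) *
        (q * ∑ i ∈ Finset.range M, (1 - q) ^ i) := by ring

private lemma Pmono (M : ℕ) (hM : 2 ≤ M) :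
    StrictMonoOn (fun q : ℝ => (1 - (1 - q ^ 2) ^ M) / (1 - (1 - q) ^ M) ^ 2)
      (Set.Ioo 0 1) := by
  have hM0 : M ≠ 0 := by omega
  have hSpos : ∀ q : ℝ, q ∈ Set.Ioo (0:ℝ) 1 → 0 < 1 - (1 - q) ^ M := by
    intro q hq
    have : (1 - q) ^ M < 1 := pow_lt_one₀ (by linarith [hq.2]) (by linarith [hq.1]) hM0
    linarith
  apply strictMonoOn_of_deriv_pos (convex_Ioo 0 1)
  · apply ContinuousOn.div
    · fun_prop
    · fun_prop
    · intro q hq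
      exact pow_ne_zero 2 (ne_of_gt (hSpos q hq))
  · intro q hq
    rw [interior_Ioo] at hq
    obtain ⟨hq0, hq1⟩ := hq
    have hS := hSpos q ⟨hq0, hq1⟩
    have hT : 0 < 1 - (1 - q ^ 2) ^ M := by
      have : (1 - q ^ 2) ^ M < 1 := pow_lt_one₀ (by nlinarith) (by nlinarith) hM0
      linarith
    have hSder : HasDerivAt (fun x : ℝ => 1 - (1 - x) ^ M) _ q :=
      (((hasDerivAt_id q).const_sub 1).pow M).const_sub 1
    have hTder : HasDerivAt (fun x : ℝ => 1 - (1 - x ^ 2) ^ M) _ q :=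
      (((hasDerivAt_pow 2 q).const_sub 1).pow M).const_sub 1
    have hden : HasDerivAt (fun x : ℝ => (1 - (1 - x) ^ M) ^ 2) _ q := hSder.pow 2
    have hP : HasDerivAt
        (fun q : ℝ => (1 - (1 - q ^ 2) ^ M) / (1 - (1 - q) ^ M) ^ 2) _ q :=
      hTder.div hden (ne_of_gt (pow_pos hS 2))
    rw [hP.deriv]
    apply div_pos
    · have key := core_ineq M hM q hq0 hq1
      have hMR : (0:ℝ) < (M:ℝ) := by
        exact_mod_cast Nat.pos_of_ne_zero hM0
      norm_num
      nlinarith [mul_pos (mul_pos (mul_pos (show (0:ℝ) < 2 by norm_num) hMR) hS)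
        (sub_pos.mpr key), hS, hT]
    · exact pow_pos (pow_pos hS 2) 2

private lemma at_most_one (M : ℕ) (hM : 2 ≤ M) (A B : ℝ) (hB : 0 < B)
    {x y : ℝ} (hx : x ∈ Set.Ioo (0:ℝ) 1) (hy : y ∈ Set.Ioo (0:ℝ) 1) (hxy : x < y)
    (hFx : (1 - (1 - x ^ 2) ^ M) * (1 - (1 - x) ^ M + A) - B * (1 - (1 - x) ^ M) ^ 2 = 0)
    (hFy : (1 - (1 - y ^ 2) ^ M) * (1 - (1 - y) ^ M + A) - B * (1 - (1 - y) ^ M) ^ 2 = 0) :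
    False := by
  obtain ⟨hx0, hx1⟩ := hx
  obtain ⟨hy0, hy1⟩ := hy
  have hM0 : M ≠ 0 := by omega
  have hSx : 0 < 1 - (1 - x) ^ M := by
    have : (1 - x) ^ M < 1 := pow_lt_one₀ (by linarith) (by linarith) hM0
    linarith
  have hSy : 0 < 1 - (1 - y) ^ M := by
    have : (1 - y) ^ M < 1 := pow_lt_one₀ (by linarith) (by linarith) hM0
    linarith
  have hTx : 0 < 1 - (1 - x ^ 2) ^ M := by
    have : (1 - x ^ 2) ^ M < 1 := pow_lt_one₀ (by nlinarith) (by nlinarith) hM0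
    linarith
  have hTy : 0 < 1 - (1 - y ^ 2) ^ M := by
    have : (1 - y ^ 2) ^ M < 1 := pow_lt_one₀ (by nlinarith) (by nlinarith) hM0
    linarith
  have hmono : (1 - (1 - x ^ 2) ^ M) / (1 - (1 - x) ^ M) ^ 2
      < (1 - (1 - y ^ 2) ^ M) / (1 - (1 - y) ^ M) ^ 2 :=
    Pmono M hM ⟨hx0, hx1⟩ ⟨hy0, hy1⟩ hxy
  have hcross : (1 - (1 - x ^ 2) ^ M) * (1 - (1 - y) ^ M) ^ 2
      < (1 - (1 - y ^ 2) ^ M) * (1 - (1 - x) ^ M) ^ 2 :=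
    (div_lt_div_iff₀ (pow_pos hSx 2) (pow_pos hSy 2)).mp hmono
  have hprodx : (1 - (1 - x ^ 2) ^ M) * (1 - (1 - x) ^ M + A)
      = B * (1 - (1 - x) ^ M) ^ 2 := by linarith
  have hprody : (1 - (1 - y ^ 2) ^ M) * (1 - (1 - y) ^ M + A)
      = B * (1 - (1 - y) ^ M) ^ 2 := by linarith
  have hxA : 0 < 1 - (1 - x) ^ M + A := by
    nlinarith [hprodx, hTx, mul_pos hB (pow_pos hSx 2)]
  have hSxy : 1 - (1 - x) ^ M < 1 - (1 - y) ^ M := by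
    have : (1 - y) ^ M < (1 - x) ^ M :=
      pow_lt_pow_left₀ (by linarith) (by linarith) hM0
    linarith
  have h5 : (1 - (1 - x) ^ M + A) * ((1 - (1 - x ^ 2) ^ M) * (1 - (1 - y) ^ M) ^ 2)
      < (1 - (1 - x) ^ M + A) * ((1 - (1 - y ^ 2) ^ M) * (1 - (1 - x) ^ M) ^ 2) :=
    mul_lt_mul_of_pos_left hcross hxA
  have h6 : (1 - (1 - x) ^ M + A) * ((1 - (1 - y ^ 2) ^ M) * (1 - (1 - x) ^ M) ^ 2)
      < (1 - (1 - y) ^ M + A) * ((1 - (1 - y ^ 2) ^ M) * (1 - (1 - x) ^ M) ^ 2) :=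
    mul_lt_mul_of_pos_right (by linarith) (mul_pos hTy (pow_pos hSx 2))
  have h8 : (1 - (1 - x ^ 2) ^ M) * (1 - (1 - x) ^ M + A) * (1 - (1 - y) ^ M) ^ 2
      = B * (1 - (1 - x) ^ M) ^ 2 * (1 - (1 - y) ^ M) ^ 2 := by
    linear_combination (1 - (1 - y) ^ M) ^ 2 * hprodx
  have h9 : (1 - (1 - y) ^ M + A) * ((1 - (1 - y ^ 2) ^ M) * (1 - (1 - x) ^ M) ^ 2)
      = B * (1 - (1 - x) ^ M) ^ 2 * (1 - (1 - y) ^ M) ^ 2 := by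
    linear_combination (1 - (1 - x) ^ M) ^ 2 * hprody
  linarith [h5, h6, h8, h9]

theorem sitebond_approx_unique_root (pc qc : ℝ) (hpc : 0 < pc) (hpq : pc ≤ qc)
    (hqc : qc < 1) (M : ℕ) (hM : 2 ≤ M) :
    ∃! q : ℝ, q ∈ Set.Ioo (0:ℝ) 1 ∧
      (1 - (1 - q ^ 2) ^ M) * (1 - (1 - q) ^ M + (pc - qc) / (1 - pc)) -
        (pc * (1 - qc) / (1 - pc)) * (1 - (1 - q) ^ M) ^ 2 = 0 := by
  have hpc1 : pc < 1 := lt_of_le_of_lt hpq hqc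
  set A : ℝ := (pc - qc) / (1 - pc) with hAdef
  set B : ℝ := pc * (1 - qc) / (1 - pc) with hBdef
  have hAle : A ≤ 0 := div_nonpos_of_nonpos_of_nonneg (by linarith) (by linarith)
  have hBpos : 0 < B := div_pos (mul_pos hpc (by linarith)) (by linarith)
  have hM0 : M ≠ 0 := by omega
  set F : ℝ → ℝ := fun q => (1 - (1 - q ^ 2) ^ M) * (1 - (1 - q) ^ M + A) -
      B * (1 - (1 - q) ^ M) ^ 2 with hFdef
  have hFcont : Continuous F := by fun_prop
  have hF1 : F 1 = 1 - qc := by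
    have h1 : F 1 = 1 + A - B := by
      simp only [hFdef]
      norm_num [zero_pow hM0]
    have hne : (1:ℝ) - pc ≠ 0 := by linarith
    rw [h1, hAdef, hBdef]
    field_simp
    ring
  -- existence
  set q0 : ℝ := min (B / M) 1 / 2 with hq0def
  have hMR : (0:ℝ) < (M:ℝ) := by exact_mod_cast Nat.pos_of_ne_zero hM0
  have hminpos : 0 < min (B / M) 1 := lt_min (by positivity) one_pos
  have hq0pos : 0 < q0 := by rw [hq0def]; linarith
  have hq0half : q0 ≤ 1 / 2 := by
    rw [hq0def]
    have := min_le_right (B / M) 1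
    linarith
  have hq0lt1 : q0 < 1 := by linarith
  have hq0BM : q0 * M < B := by
    have h1 : q0 < B / M := by
      rw [hq0def]
      have := min_le_left (B / M) 1
      linarith
    calc q0 * M < (B / M) * M := by
          exact mul_lt_mul_of_pos_right h1 hMR
      _ = B := by field_simp
  have hS0 : q0 ≤ 1 - (1 - q0) ^ M := by
    have h1 : (1 - q0) ^ M ≤ (1 - q0) ^ 1 :=
      pow_le_pow_of_le_one (by linarith) (by linarith) (by omega)
    rw [pow_one] at h1
    linarith
  have hS0pos : 0 < 1 - (1 - q0) ^ M := lt_of_lt_of_le hq0pos hS0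
  have hT0 : 1 - (1 - q0 ^ 2) ^ M ≤ (M:ℝ) * q0 ^ 2 := by
    have hb := one_add_mul_le_pow (a := -(q0 ^ 2)) (by nlinarith) M
    rw [show (1:ℝ) + -(q0 ^ 2) = 1 - q0 ^ 2 by ring] at hb
    nlinarith [hb]
  have hT0nonneg : 0 ≤ 1 - (1 - q0 ^ 2) ^ M := by
    have : (1 - q0 ^ 2) ^ M ≤ 1 := pow_le_one₀ (by nlinarith) (by nlinarith)
    linarith
  have hFq0 : F q0 < 0 := by
    have h1 : (1 - (1 - q0 ^ 2) ^ M) * (1 - (1 - q0) ^ M + A)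
        ≤ (1 - (1 - q0 ^ 2) ^ M) * (1 - (1 - q0) ^ M) :=
      mul_le_mul_of_nonneg_left (by linarith) hT0nonneg
    have h2 : (1 - (1 - q0 ^ 2) ^ M) < B * (1 - (1 - q0) ^ M) := by
      have ha : (M:ℝ) * q0 ^ 2 < B * q0 := by nlinarith
      have hbb : B * q0 ≤ B * (1 - (1 - q0) ^ M) :=
        mul_le_mul_of_nonneg_left hS0 (le_of_lt hBpos)
      linarith
    have h3 := mul_lt_mul_of_pos_right h2 hS0pos
    simp only [hFdef]
    nlinarith [h1, h3]
  obtain ⟨r, hrmem, hFr0⟩ := intermediate_value_Ioo (le_of_lt hq0lt1)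
    hFcont.continuousOn (show (0:ℝ) ∈ Set.Ioo (F q0) (F 1) from ⟨hFq0, by rw [hF1]; linarith⟩)
  have hr01 : r ∈ Set.Ioo (0:ℝ) 1 := ⟨lt_trans hq0pos hrmem.1, hrmem.2⟩
  refine ⟨r, ⟨hr01, hFr0⟩, ?_⟩
  rintro y ⟨hy, hFy⟩
  rcases lt_trichotomy y r with h | h | h
  · exact absurd (at_most_one M hM A B hBpos hy hr01 h hFy hFr0) not_false
  · exact h
  · exact absurd (at_most_one M hM A B hBpos hr01 hy h hFr0 hFy) not_false
end
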